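/- arXiv:2311.16281 — 5 statements merged into one kernel-verified Lean document; each statement's English description precedes it below -/
import Mathlib

section
/- For an integer $n > 1$, the summatory function of $\varphi_n$ satisfies $\sum_{k \le x} \varphi_n(k) = \frac{x^{n+1}}{(n+1)\zeta(n+1)} + O(x^n)$ as $x \to \infty$, where $\varphi_n(k) = k^n \sum_{d \mid k} \mu(d)/d^n$. -/
open Finset Filter

/-- `phiN n k = k^n * ∑_{d ∣ k} μ(d)/d^n`, as a real number. -/
noncomputable def phiN (n k : ℕ) : ℝ :=
  (k : ℝ) ^ n * ∑ d ∈ k.divisors, (ArithmeticFunction.moebius d : ℝ) / (d : ℝ) ^ n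

/-!
Since `φₙ = μ * idⁿ`, we have `∑_{k ≤ x} φₙ(k) = ∑_d μ(d) Sₙ(⌊x/d⌋)` with `Sₙ(m) = ∑_{q ≤ m} qⁿ`,
while `∑_d μ(d)/d^(n+1) = 1/ζ(n+1)` gives `x^(n+1)/((n+1)ζ(n+1)) = ∑_d μ(d) (x/d)^(n+1)/(n+1)`.
Comparing `Sₙ` with `∫ tⁿ dt` yields `|Sₙ(⌊y⌋) - y^(n+1)/(n+1)| ≤ yⁿ` for every `y ≥ 0`, so the
difference of the two sides is at most `∑_d (x/d)ⁿ = ζ(n) xⁿ`, which is finite as `n > 1`.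
-/

open ArithmeticFunction
open scoped ArithmeticFunction.Moebius ArithmeticFunction.zeta

lemma monotoneOn_pow_Icc (n m : ℕ) : MonotoneOn (fun x : ℝ => x ^ n) (Set.Icc (0 : ℕ) m) :=
  pow_left_monotoneOn.mono fun _ hx => by simpa using hx.1

lemma div_le_sum_Ioc_pow (n m : ℕ) :
    (m : ℝ) ^ (n + 1) / (n + 1) ≤ ∑ q ∈ Ioc 0 m, (q : ℝ) ^ n := by
  have h := (monotoneOn_pow_Icc n m).integral_le_sum_Ico (Nat.zero_le m)
  rwa [Nat.cast_zero, integral_pow, zero_pow n.succ_ne_zero, sub_zero,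
    sum_Ico_add' (fun q : ℕ => (q : ℝ) ^ n), Ico_add_one_add_one_eq_Ioc] at h

lemma sum_Ioc_pow_le (n m : ℕ) :
    ∑ q ∈ Ioc 0 m, (q : ℝ) ^ n ≤ (m : ℝ) ^ (n + 1) / (n + 1) + (m : ℝ) ^ n := by
  have h := (monotoneOn_pow_Icc n m).sum_le_integral_Ico (Nat.zero_le m)
  rw [Nat.cast_zero, integral_pow, zero_pow n.succ_ne_zero, sub_zero] at h
  have hsplit := (sum_Ioc_add_eq_sum_Icc (f := fun q : ℕ => (q : ℝ) ^ n) (Nat.zero_le m)).trans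
    (sum_Ico_add_eq_sum_Icc (Nat.zero_le m)).symm
  have h0 : (0 : ℝ) ≤ ((0 : ℕ) : ℝ) ^ n := pow_nonneg (Nat.cast_nonneg 0) n
  linarith

lemma pow_succ_sub_pow_le {a b : ℝ} (ha : 0 ≤ a) (hab : a ≤ b) (n : ℕ) :
    b ^ (n + 1) - a ^ (n + 1) ≤ (b - a) * (n + 1) * b ^ n := by
  have h := (le_abs_self _).trans (abs_pow_sub_pow_le b a (n + 1))
  rwa [abs_of_nonneg (sub_nonneg.2 hab), abs_of_nonneg (ha.trans hab), abs_of_nonneg ha,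
    max_eq_left hab, Nat.add_sub_cancel, Nat.cast_succ] at h

lemma abs_sum_Ioc_floor_pow_sub_le (n : ℕ) {y : ℝ} (hy : 0 ≤ y) :
    |∑ q ∈ Ioc 0 ⌊y⌋₊, (q : ℝ) ^ n - y ^ (n + 1) / (n + 1)| ≤ y ^ n := by
  set m := ⌊y⌋₊
  have hmy : (m : ℝ) ≤ y := Nat.floor_le hy
  have hym : y - m ≤ 1 := by linarith [Nat.lt_floor_add_one y]
  have hgap : y ^ (n + 1) / (n + 1) - (m : ℝ) ^ (n + 1) / (n + 1) ≤ y ^ n := by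
    rw [← sub_div, div_le_iff₀ (by positivity)]
    calc y ^ (n + 1) - (m : ℝ) ^ (n + 1) ≤ (y - m) * (n + 1) * y ^ n :=
          pow_succ_sub_pow_le m.cast_nonneg hmy n
      _ ≤ 1 * (n + 1) * y ^ n := by gcongr
      _ = y ^ n * (n + 1) := by ring
  have hmono : (m : ℝ) ^ (n + 1) / (n + 1) ≤ y ^ (n + 1) / (n + 1) := by gcongr
  have hpow : (m : ℝ) ^ n ≤ y ^ n := by gcongr
  rw [abs_le]
  constructor
  · linarith [div_le_sum_Ioc_pow n m]
  · linarith [sum_Ioc_pow_le n m]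

lemma phiN_eq_moebius_mul_pow (n k : ℕ) :
    phiN n k = ((μ : ArithmeticFunction ℝ) * (pow n : ArithmeticFunction ℝ)) k := by
  rcases eq_or_ne k 0 with rfl | hk
  · simp [phiN]
  rw [mul_apply, Nat.sum_divisorsAntidiagonal
    (fun d q => (μ : ArithmeticFunction ℝ) d * (pow n : ArithmeticFunction ℝ) q), phiN, mul_sum]
  refine sum_congr rfl fun d hd => ?_
  have hdk := Nat.dvd_of_mem_divisors hd
  have hd0 := Nat.pos_of_mem_divisors hd
  have hkd : k / d ≠ 0 := (Nat.div_pos (Nat.le_of_dvd (Nat.pos_of_ne_zero hk) hdk) hd0).ne'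
  rw [intCoe_apply, natCoe_apply, pow_apply, if_neg fun h => hkd h.2, Nat.cast_pow,
    Nat.cast_div hdk (Nat.cast_ne_zero.2 hd0.ne'), div_pow]
  ring

lemma sum_Icc_phiN (n x : ℕ) :
    ∑ k ∈ Icc 1 x, phiN n k = ∑ d ∈ Ioc 0 x, (μ d : ℝ) * ∑ q ∈ Ioc 0 (x / d), (q : ℝ) ^ n := by
  rw [← zero_add 1, Icc_add_one_left_eq_Ioc]
  simp_rw [phiN_eq_moebius_mul_pow, sum_Ioc_mul_eq_sum_sum, intCoe_apply, natCoe_apply]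
  refine sum_congr rfl fun d _ => congrArg _ (sum_congr rfl fun q hq => ?_)
  rw [pow_apply, if_neg fun h => (mem_Ioc.1 hq).1.ne' h.2, Nat.cast_pow]

lemma abs_moebius_cast_le_one {R : Type*} [Ring R] [LinearOrder R] [IsStrictOrderedRing R]
    (d : ℕ) : |(μ d : R)| ≤ 1 := by
  exact_mod_cast abs_moebius_le_one

lemma summable_moebius_div_pow {s : ℕ} (hs : 1 < s) :
    Summable fun d : ℕ => (μ d : ℝ) / (d : ℝ) ^ s := by
  refine (Real.summable_nat_pow_inv.2 hs).of_norm_bounded fun d => ?_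
  rw [Real.norm_eq_abs, abs_div, abs_pow, Nat.abs_cast, div_eq_mul_inv]
  exact mul_le_of_le_one_left (inv_nonneg.2 (pow_nonneg d.cast_nonneg s))
    (abs_moebius_cast_le_one d)

lemma tsum_inv_pow_mul_tsum_moebius_div_pow {s : ℕ} (hs : 1 < s) :
    (∑' d : ℕ, ((d : ℝ) ^ s)⁻¹) * ∑' d : ℕ, (μ d : ℝ) / (d : ℝ) ^ s = 1 := by
  have key := LSeries_zeta_mul_Lseries_moebius (s := s) (by simpa using hs)
  have hζ : LSeries (fun k => (ζ k : ℂ)) s = ((∑' d : ℕ, ((d : ℝ) ^ s)⁻¹ : ℝ) : ℂ) := by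
    rw [Complex.ofReal_tsum]
    refine tsum_congr fun k => ?_
    rcases eq_or_ne k 0 with rfl | hk
    · simp [LSeries.term, zero_pow (show s ≠ 0 by omega)]
    · simp [hk]
  have hμ : LSeries (fun k => (μ k : ℂ)) s = ((∑' d : ℕ, (μ d : ℝ) / (d : ℝ) ^ s : ℝ) : ℂ) := by
    rw [Complex.ofReal_tsum]
    refine tsum_congr fun k => ?_
    rcases eq_or_ne k 0 with rfl | hk
    · simp [LSeries.term]
    · simp [hk]
  rw [hζ, hμ] at key
  exact_mod_cast key

lemma tsum_moebius_div_pow_eq_inv {s : ℕ} (hs : 1 < s) :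
    ∑' d : ℕ, (μ d : ℝ) / (d : ℝ) ^ s = (∑' k : ℕ, 1 / ((k : ℝ) + 1) ^ s)⁻¹ := by
  have hζ : ∑' k : ℕ, 1 / ((k : ℝ) + 1) ^ s = ∑' d : ℕ, ((d : ℝ) ^ s)⁻¹ := by
    rw [(Real.summable_nat_pow_inv.2 hs).tsum_eq_zero_add]
    simp [zero_pow (show s ≠ 0 by omega)]
  rw [hζ]
  exact eq_inv_of_mul_eq_one_right (tsum_inv_pow_mul_tsum_moebius_div_pow hs)

lemma hasSum_moebius_mul_sum_Ioc_pow_sub {n : ℕ} (hn : n ≠ 0) (x : ℕ) :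
    HasSum (fun d : ℕ => (μ d : ℝ) *
        (∑ q ∈ Ioc 0 (x / d), (q : ℝ) ^ n - ((x : ℝ) / d) ^ (n + 1) / (n + 1)))
      (∑ k ∈ Icc 1 x, phiN n k -
        (x : ℝ) ^ (n + 1) / ((n + 1) * ∑' k : ℕ, 1 / ((k : ℝ) + 1) ^ (n + 1))) := by
  have hs : 1 < n + 1 := by omega
  have hsum : HasSum (fun d : ℕ => (μ d : ℝ) * ∑ q ∈ Ioc 0 (x / d), (q : ℝ) ^ n)
      (∑ k ∈ Icc 1 x, phiN n k) := by
    rw [sum_Icc_phiN]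
    refine hasSum_sum_of_ne_finset_zero fun d hd => ?_
    rcases Nat.eq_zero_or_pos d with rfl | hd0
    · simp
    · rw [Nat.div_eq_of_lt (by simpa [hd0] using hd), Ioc_self, sum_empty, mul_zero]
  have hmain : HasSum (fun d : ℕ => (μ d : ℝ) * (((x : ℝ) / d) ^ (n + 1) / (n + 1)))
      ((x : ℝ) ^ (n + 1) / ((n + 1) * ∑' k : ℕ, 1 / ((k : ℝ) + 1) ^ (n + 1))) := by
    have h := (summable_moebius_div_pow hs).hasSum.mul_right ((x : ℝ) ^ (n + 1) / (n + 1))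
    rw [tsum_moebius_div_pow_eq_inv hs] at h
    have hterm : (fun d : ℕ => (μ d : ℝ) * (((x : ℝ) / d) ^ (n + 1) / (n + 1))) =
        fun d : ℕ => (μ d : ℝ) / (d : ℝ) ^ (n + 1) * ((x : ℝ) ^ (n + 1) / (n + 1)) := by
      funext d
      rw [div_pow]
      ring
    have hvalue : (x : ℝ) ^ (n + 1) / ((n + 1) * ∑' k : ℕ, 1 / ((k : ℝ) + 1) ^ (n + 1)) =
        (∑' k : ℕ, 1 / ((k : ℝ) + 1) ^ (n + 1))⁻¹ * ((x : ℝ) ^ (n + 1) / (n + 1)) := by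
      rw [mul_comm, ← div_div]
      ring
    rwa [hterm, hvalue]
  simpa only [mul_sub] using hsum.sub hmain

theorem stmt2 (n : ℕ) (hn : 1 < n) :
    (fun x : ℕ =>
        (∑ k ∈ Finset.Icc 1 x, phiN n k) -
          (x : ℝ) ^ (n + 1) / (((n : ℝ) + 1) * ∑' k : ℕ, 1 / ((k : ℝ) + 1) ^ (n + 1)))
      =O[atTop] fun x : ℕ => (x : ℝ) ^ n := by
  refine Asymptotics.IsBigO.of_bound (∑' d : ℕ, ((d : ℝ) ^ n)⁻¹)
    (Eventually.of_forall fun x => ?_)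
  have hbound := (Real.summable_nat_pow_inv.2 hn).hasSum.mul_left ((x : ℝ) ^ n)
  have herror (d : ℕ) :
      |∑ q ∈ Ioc 0 (x / d), (q : ℝ) ^ n - ((x : ℝ) / d) ^ (n + 1) / (n + 1)| ≤
        (x : ℝ) ^ n * ((d : ℝ) ^ n)⁻¹ := by
    rw [← div_eq_mul_inv, ← div_pow]
    simpa only [Nat.floor_div_eq_div] using
      abs_sum_Ioc_floor_pow_sub_le n (y := (x : ℝ) / d) (by positivity)
  calc _ ≤ (x : ℝ) ^ n * ∑' d : ℕ, ((d : ℝ) ^ n)⁻¹ :=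
        (hasSum_moebius_mul_sum_Ioc_pow_sub (by omega) x).norm_le_of_bounded hbound fun d => by
          rw [Real.norm_eq_abs, abs_mul]
          exact (mul_le_of_le_one_left (abs_nonneg _) (abs_moebius_cast_le_one d)).trans (herror d)
    _ = _ := by rw [Real.norm_of_nonneg (by positivity), mul_comm]
end

section
/- Let $k \ge 1$, let $L = \mathbb{Q}(\zeta_k)$ and let $\psi: \mathbb{Q}^*/\mathbb{Q}^{*k} \to L^*/L^{*k}$ be the canonical map. Then every element of $\ker\psi$ has order at most 2. -/
open IsCyclotomicExtension Polynomial

/-- Every element of the kernel of the canonical map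
`ℚ^*/ℚ^{*k} → L^*/L^{*k}`, for `L = ℚ(ζ_k)`, has order at most 2.
Equivalently: if a rational `q` becomes a `k`-th power in `L`, then `q^2`
is already a `k`-th power in `ℚ`. -/
theorem stmt3 (k : ℕ) (hk : 0 < k) :
    ∀ q : ℚˣ,
      Units.map (algebraMap ℚ (CyclotomicField k ℚ)).toMonoidHom q ∈
        (powMonoidHom k : (CyclotomicField k ℚ)ˣ →* (CyclotomicField k ℚ)ˣ).range →
      q ^ 2 ∈ (powMonoidHom k : ℚˣ →* ℚˣ).range := by
  intro q hq
  haveI : NeZero k := ⟨hk.ne'⟩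
  set n : ℕ := k with hn
  set L := CyclotomicField n ℚ with hL
  haveI : IsCyclotomicExtension {n} ℚ L := CyclotomicField.isCyclotomicExtension n ℚ
  obtain ⟨z, hz⟩ := hq
  have hkn : (n : ℕ) = k := rfl
  have hirr : Irreducible (cyclotomic (n : ℕ) ℚ) := cyclotomic.irreducible_rat hk
  set ζ : L := zeta n ℚ L with hzeta
  have hζ : IsPrimitiveRoot ζ (n : ℕ) := zeta_spec n ℚ L
  set e := autEquivPow L hirr with he
  set c : L ≃ₐ[ℚ] L := e.symm (-1) with hcdef
  -- every automorphism acts on n-th roots of unity by the same power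
  have key : ∀ (σ : L ≃ₐ[ℚ] L) (ω : L), ω ^ (n : ℕ) = 1 →
      σ ω = ω ^ ((hζ.autToPow ℚ σ : ZMod (n : ℕ)).val) := by
    intro σ ω hω
    obtain ⟨i, _, rfl⟩ := hζ.eq_pow_of_pow_eq_one hω
    rw [map_pow, ← hζ.autToPow_spec ℚ σ, ← pow_mul, ← pow_mul, mul_comm]
  -- c inverts n-th roots of unity
  have hc : ∀ ω : L, ω ^ (n : ℕ) = 1 → c ω * ω = 1 := by
    intro ω hω
    have hec : hζ.autToPow ℚ c = -1 := by
      have h1 : e c = -1 := e.apply_symm_apply (-1)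
      rw [he, autEquivPow_apply] at h1
      exact h1
    have hdvd : (n : ℕ) ∣ ((-1 : (ZMod (n : ℕ))ˣ) : ZMod (n : ℕ)).val + 1 := by
      have h0 : (((((-1 : (ZMod (n : ℕ))ˣ) : ZMod (n : ℕ)).val + 1 : ℕ)) : ZMod (n : ℕ)) = 0 := by
        push_cast [ZMod.natCast_val, ZMod.cast_id]
        ring
      exact (ZMod.natCast_eq_zero_iff _ _).mp h0
    obtain ⟨m, hm⟩ := hdvd
    rw [key c ω hω, hec, ← pow_succ, hm, pow_mul, hω, one_pow]
  -- the Galois group is abelian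
  have hcomm : ∀ (σ : L ≃ₐ[ℚ] L) (t : L), σ (c t) = c (σ t) := by
    intro σ t
    have h1 : σ * c = c * σ := e.injective (by rw [map_mul, map_mul, mul_comm])
    calc σ (c t) = (σ * c) t := rfl
    _ = (c * σ) t := by rw [h1]
    _ = c (σ t) := rfl
  set x : L := (z : L) with hx
  have hxk : x ^ (n : ℕ) = algebraMap ℚ L (q : ℚ) := by
    have := congrArg Units.val hz
    simpa [powMonoidHom, hkn] using this
  have hx0 : x ≠ 0 := z.ne_zero
  have hq0 : algebraMap ℚ L (q : ℚ) ≠ 0 :=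
    (map_ne_zero (algebraMap ℚ L)).mpr q.ne_zero
  set y : L := x * c x with hy
  -- y is fixed by every automorphism
  have hfix : ∀ σ : L ≃ₐ[ℚ] L, σ y = y := by
    intro σ
    set ω : L := σ x * x⁻¹ with hω
    have hωk : ω ^ (n : ℕ) = 1 := by
      rw [hω, mul_pow, ← map_pow, inv_pow, hxk,
        AlgEquiv.commutes, mul_inv_cancel₀ hq0]
    have hσx : σ x = ω * x := by
      rw [hω, mul_assoc, inv_mul_cancel₀ hx0, mul_one]
    calc σ y = σ x * σ (c x) := map_mul σ x (c x)
    _ = σ x * c (σ x) := by rw [hcomm]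
    _ = (ω * x) * (c ω * c x) := by rw [hσx, map_mul]
    _ = (c ω * ω) * (x * c x) := by ring
    _ = y := by rw [hc ω hωk, one_mul, hy]
  -- hence y is rational
  haveI : IsGalois ℚ L := IsCyclotomicExtension.isGalois {n} ℚ L
  haveI : FiniteDimensional ℚ L := IsCyclotomicExtension.finiteDimensional {n} ℚ L
  have hybot : y ∈ (⊥ : IntermediateField ℚ L) := by
    rw [← IsGalois.fixedField_fixingSubgroup (⊥ : IntermediateField ℚ L)]
    exact fun σ => hfix σ
  obtain ⟨r, hr⟩ := IntermediateField.mem_bot.mp hybot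
  have hy0 : y ≠ 0 := mul_ne_zero hx0 (fun h => hx0 (c.injective (by simp [h])))
  have hr0 : r ≠ 0 := by
    rintro rfl
    exact hy0 (by simp [← hr])
  have hrk : r ^ k = (q : ℚ) ^ 2 := by
    apply (algebraMap ℚ L).injective
    rw [map_pow]
    erw [hr]
    rw [hy, ← hkn, mul_pow, hxk, ← map_pow, hxk, AlgEquiv.commutes, map_pow, sq]
    rfl
  exact ⟨Units.mk0 r hr0, Units.ext (by simp [powMonoidHom, hn, hrk])⟩
end

section
/- Let $c_1, \ldots, c_\nu \in \mathbb{Q}^*_{>0}$ be multiplicatively independent (i.e. $\prod c_h^{l_h} = 1$ with $l_h \in \mathbb{Z}$ implies all $l_h = 0$). For $x \in \mathbb{Q}^*_{>0}$ let $m_x$ be the largest integer $m$ with $x^{1/m} \in \mathbb{Q}$, and $\widehat{x} = x^{1/m_x}$. Then $c_1, \ldots, c_\nu$ are strongly multiplicatively independent (whenever $\prod c_h^{l_h} = c$ then $m_{c_h} l_h \equiv 0 \bmod m_c$ for all $h$) if and only if: whenever $c \in \langle c_1, \ldots, c_\nu \rangle$, then $\widehat{c} \in \langle \widehat{c_1},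 \ldots, \widehat{c_\nu} \rangle$. -/
open scoped Classical

/-- `mRoot x` is the largest `m` such that `x` has a positive rational `m`-th root. -/
noncomputable def mRoot (x : ℚ) : ℕ :=
  sSup {m : ℕ | ∃ y : ℚ, 0 < y ∧ y ^ m = x}

/-- `hatRoot x` is a positive rational with `(hatRoot x) ^ (mRoot x) = x` (when one exists). -/
noncomputable def hatRoot (x : ℚ) : ℚ :=
  if h : ∃ y : ℚ, 0 < y ∧ y ^ mRoot x = x then h.choose else 1

/-!
Write `c h = ĉ_h ^ m_h`, so that every element of `⟨c_1, …, c_ν⟩` is a product of powers of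
the `ĉ_h`, and the `ĉ_h` inherit multiplicative independence from the `c_h`.  If
`∏ c_h ^ l_h = x`, then `m_x ∣ m_h l_h` for all `h` makes `∏ ĉ_h ^ (m_h l_h / m_x)` a positive
`m_x`-th root of `x`, i.e. `x̂`.  Conversely, from `x̂ = ∏ ĉ_h ^ l'_h` we get two expressions
`x = ∏ ĉ_h ^ (m_x l'_h) = ∏ ĉ_h ^ (m_h l_h)`, and independence of the `ĉ_h` gives
`m_h l_h = m_x l'_h`.
-/

section MultIndependent

variable {ι G : Type*} [Fintype ι]

def MultIndependent [DivisionCommMonoid G] (b : ι → G) : Prop :=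
  ∀ l : ι → ℤ, ∏ i, b i ^ l i = 1 → l = 0

theorem prod_zpow_mul [DivisionCommMonoid G] (b : ι → G) (k : ι → ℤ) (n : ℤ) :
    ∏ i, b i ^ (k i * n) = (∏ i, b i ^ k i) ^ n := by
  simp only [zpow_mul, Finset.prod_zpow]

theorem MultIndependent.ne_one [DivisionCommMonoid G] {b : ι → G} (hb : MultIndependent b)
    (i : ι) : b i ≠ 1 := by
  intro hi
  have hsingle := congrFun (hb (Pi.single i 1) (Fintype.prod_eq_one _ fun j => by
    rcases eq_or_ne j i with rfl | hj <;> simp [*])) i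
  simp at hsingle

theorem MultIndependent.of_pow [DivisionCommMonoid G] {b : ι → G} (m : ι → ℕ)
    (hm : ∀ i, 0 < m i) (hb : MultIndependent fun i => b i ^ m i) : MultIndependent b := by
  intro k hk
  -- raise the relation to the power `∏ m`, absorbing `m i` into the exponent of `b i`
  set M : ι → ℤ := fun i => ∏ j ∈ Finset.univ.erase i, (m j : ℤ)
  have hMpos : ∀ i, 0 < M i := fun i => Finset.prod_pos fun j _ => by exact_mod_cast hm j
  have hmM : ∀ i, (m i : ℤ) * M i = ∏ j, (m j : ℤ) := fun i =>
    Finset.mul_prod_erase _ (fun j => (m j : ℤ)) (Finset.mem_univ i)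
  have hkM : ∏ i, (b i ^ m i) ^ (k i * M i) = 1 := by
    calc ∏ i, (b i ^ m i) ^ (k i * M i) = ∏ i, b i ^ (k i * ∏ j, (m j : ℤ)) := by
          refine Finset.prod_congr rfl fun i _ => ?_
          rw [← zpow_natCast, ← zpow_mul, ← hmM i, mul_left_comm]
      _ = 1 := by rw [prod_zpow_mul, hk, one_zpow]
  funext i
  simpa [(hMpos i).ne'] using congrFun (hb _ hkM) i

theorem MultIndependent.zpow_injective [CommGroupWithZero G] {b : ι → G}
    (hb : MultIndependent b) (hb0 : ∀ i, b i ≠ 0) {k l : ι → ℤ}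
    (h : ∏ i, b i ^ k i = ∏ i, b i ^ l i) : k = l := by
  have hdiff : ∏ i, b i ^ (k - l) i = 1 := by
    simp only [Pi.sub_apply, zpow_sub₀ (hb0 _), Finset.prod_div_distrib, h]
    exact div_self (Finset.prod_ne_zero_iff.mpr fun i _ => zpow_ne_zero _ (hb0 i))
  exact sub_eq_zero.mp (hb _ hdiff)

end MultIndependent

section HatRoot

variable {x : ℚ}

theorem one_mem_rootSet (hx : 0 < x) : 1 ∈ {m : ℕ | ∃ y : ℚ, 0 < y ∧ y ^ m = x} :=
  ⟨x, hx, pow_one x⟩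

theorem bddAbove_rootSet (hx : 0 < x) (hx1 : x ≠ 1) :
    BddAbove {m : ℕ | ∃ y : ℚ, 0 < y ∧ y ^ m = x} := by
  refine ⟨x.num.natAbs + x.den, ?_⟩
  rintro m ⟨y, hy, rfl⟩
  have hy1 : y ≠ 1 := by rintro rfl; simp at hx1
  -- `y ≠ 1` has numerator or denominator at least 2, and these are raised to the `m`-th power
  have htwo : 2 ≤ y.num.natAbs ∨ 2 ≤ y.den := by
    by_contra! hc
    have hnum : y.num = 1 := by have := Rat.num_pos.mpr hy; omega
    have hden : y.den = 1 := by have := y.pos; omega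
    exact hy1 (by rw [← Rat.num_div_den y, hnum, hden]; norm_num)
  have hm : m < 2 ^ m := Nat.lt_two_pow_self
  rcases htwo with h | h
  · have := Nat.pow_le_pow_left h m
    rw [Rat.num_pow, Int.natAbs_pow]
    omega
  · have := Nat.pow_le_pow_left h m
    rw [Rat.den_pow]
    omega

theorem mRoot_pos (hx : 0 < x) (hx1 : x ≠ 1) : 0 < mRoot x :=
  le_csSup (bddAbove_rootSet hx hx1) (one_mem_rootSet hx)

theorem hatRoot_spec (hx : 0 < x) (hx1 : x ≠ 1) :
    0 < hatRoot x ∧ hatRoot x ^ mRoot x = x := by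
  have h : ∃ y : ℚ, 0 < y ∧ y ^ mRoot x = x :=
    Nat.sSup_mem ⟨1, one_mem_rootSet hx⟩ (bddAbove_rootSet hx hx1)
  rw [hatRoot, dif_pos h]
  exact h.choose_spec

theorem eq_hatRoot_of_pow_eq {y : ℚ} (hx : 0 < x) (hx1 : x ≠ 1) (hy : 0 < y)
    (h : y ^ (mRoot x : ℤ) = x) : y = hatRoot x := by
  obtain ⟨hpos, hpow⟩ := hatRoot_spec hx hx1
  rw [zpow_natCast] at h
  exact (pow_left_inj₀ hy.le hpos.le (mRoot_pos hx hx1).ne').mp (h.trans hpow.symm)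

theorem zpow_mRoot_hatRoot (hx : 0 < x) (hx1 : x ≠ 1) : hatRoot x ^ (mRoot x : ℤ) = x := by
  rw [zpow_natCast, (hatRoot_spec hx hx1).2]

end HatRoot

theorem stmt5 (ν : ℕ) (c : Fin ν → ℚ) (hpos : ∀ h, 0 < c h)
    (hindep : ∀ l : Fin ν → ℤ, ∏ h, c h ^ l h = 1 → l = 0) :
    (∀ (l : Fin ν → ℤ) (x : ℚ), 0 < x → x ≠ 1 → ∏ h, c h ^ l h = x →
        ∀ h, (mRoot x : ℤ) ∣ (mRoot (c h) : ℤ) * l h) ↔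
      (∀ (l : Fin ν → ℤ) (x : ℚ), 0 < x → x ≠ 1 → ∏ h, c h ^ l h = x →
        ∃ l' : Fin ν → ℤ, hatRoot x = ∏ h, hatRoot (c h) ^ l' h) := by
  have hne1 : ∀ h, c h ≠ 1 := MultIndependent.ne_one hindep
  have hhat_pos : ∀ h, 0 < hatRoot (c h) := fun h => (hatRoot_spec (hpos h) (hne1 h)).1
  have hc : ∀ h, hatRoot (c h) ^ (mRoot (c h) : ℤ) = c h :=
    fun h => zpow_mRoot_hatRoot (hpos h) (hne1 h)
  have hexpand : ∀ l : Fin ν → ℤ,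
      ∏ h, c h ^ l h = ∏ h, hatRoot (c h) ^ ((mRoot (c h) : ℤ) * l h) := fun l =>
    Finset.prod_congr rfl fun h _ => by rw [zpow_mul, hc]
  have hhat : MultIndependent fun h => hatRoot (c h) :=
    .of_pow _ (fun h => mRoot_pos (hpos h) (hne1 h)) fun l => by
      simpa only [← zpow_natCast, hc] using hindep l
  constructor
  · intro hstrong l x hx hx1 hprod
    refine ⟨fun h => mRoot (c h) * l h / mRoot x,
      (eq_hatRoot_of_pow_eq hx hx1 (Finset.prod_pos fun h _ => ?_) ?_).symm⟩
    · exact zpow_pos (hhat_pos h) _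
    · refine (prod_zpow_mul _ _ _).symm.trans
        ((Finset.prod_congr rfl fun h _ => ?_).trans ((hexpand l).symm.trans hprod))
      rw [Int.ediv_mul_cancel (hstrong l x hx hx1 hprod h)]
  · intro hclosed l x hx hx1 hprod h
    obtain ⟨l', hl'⟩ := hclosed l x hx hx1 hprod
    have hexps := hhat.zpow_injective (fun h => (hhat_pos h).ne')
      (k := fun h => l' h * mRoot x) (l := fun h => mRoot (c h) * l h)
      (by rw [prod_zpow_mul, ← hl', zpow_mRoot_hatRoot hx hx1, ← hexpand, hprod])
    exact ⟨l' h, by rw [mul_comm (mRoot x : ℤ)]; exact (congrFun hexps h).symm⟩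
end

section
/- $\prod_{p \mid n} \frac{1}{1 - 1/p - 1/p^2} = O(\log n)$ as $n \to \infty$, where the product runs over prime divisors of $n$. -/
open Filter Finset

/-!
The factor `(1 - 1/x - 1/x²)⁻¹ = x² / (x² - x - 1)` decreases in `x`, so the product over the
`ω(n)` prime factors of `n` is at most the product over `2, 3, …, ω(n) + 1`. There the first
factor is `4` and from `k = 3` on each factor is at most `(k - 1) / (k - 2)`, which telescopes
to a bound `4 ω(n)`. Finally `2 ^ ω(n) ≤ n`, so `ω(n) ≤ log₂ n`.
-/

theorem Finset.prod_le_prod_range_card_of_antitoneOn {R : Type*} [CommSemiring R] [PartialOrder R]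
    [IsOrderedRing R] {f : ℕ → R} {a : ℕ} (hf : AntitoneOn f (Set.Ici a))
    (hf₀ : ∀ k, a ≤ k → 0 ≤ f k) {S : Finset ℕ} (hS : ∀ k ∈ S, a ≤ k) :
    ∏ k ∈ S, f k ≤ ∏ i ∈ range #S, f (a + i) := by
  induction S using Finset.induction_on_max with
  | empty => simp
  | insert b s hb ih =>
    have hbs : b ∉ s := fun h => (hb b h).false
    have hs : ∀ k ∈ s, a ≤ k := fun k hk => hS k (mem_insert_of_mem hk)
    have hab : a ≤ b := hS b (mem_insert_self b s)
    have hcard : a + #s ≤ b := by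
      have := card_le_card fun k hk => mem_Ico.mpr ⟨hs k hk, hb k hk⟩
      rw [Nat.card_Ico] at this
      omega
    rw [prod_insert hbs, card_insert_of_notMem hbs, prod_range_succ, mul_comm]
    exact mul_le_mul (ih hs) (hf (Set.mem_Ici.mpr (by omega)) hab hcard) (hf₀ b hab)
      (prod_nonneg fun i _ => hf₀ _ (by omega))

theorem Nat.two_pow_card_primeFactors_le {n : ℕ} (hn : n ≠ 0) : 2 ^ #n.primeFactors ≤ n :=
  calc 2 ^ #n.primeFactors ≤ ∏ p ∈ n.primeFactors, p :=
        pow_card_le_prod _ _ _ fun _ hp => (Nat.prime_of_mem_primeFactors hp).two_le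
    _ ≤ n := Nat.le_of_dvd (Nat.pos_of_ne_zero hn) (Nat.prod_primeFactors_dvd n)

theorem Nat.card_primeFactors_le_logb {n : ℕ} (hn : n ≠ 0) :
    (#n.primeFactors : ℝ) ≤ Real.logb 2 n := by
  rw [Real.le_logb_iff_rpow_le one_lt_two (by positivity), Real.rpow_natCast]
  exact_mod_cast two_pow_card_primeFactors_le hn

theorem one_sub_inv_sub_inv_sq_pos {x : ℝ} (hx : 2 ≤ x) : 0 < 1 - 1 / x - 1 / x ^ 2 := by
  have : 1 / x ≤ 1 / 2 := one_div_le_one_div_of_le two_pos hx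
  have : 1 / x ^ 2 ≤ 1 / 2 ^ 2 := one_div_le_one_div_of_le (by norm_num) (by gcongr)
  linarith

theorem inv_one_sub_inv_sub_inv_sq_nonneg {x : ℝ} (hx : 2 ≤ x) :
    0 ≤ (1 - 1 / x - 1 / x ^ 2)⁻¹ :=
  (inv_pos.mpr (one_sub_inv_sub_inv_sq_pos hx)).le

theorem antitoneOn_inv_one_sub_inv_sub_inv_sq :
    AntitoneOn (fun x : ℝ => (1 - 1 / x - 1 / x ^ 2)⁻¹) (Set.Ici 2) := by
  intro x (hx : 2 ≤ x) y (hy : 2 ≤ y) hxy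
  apply inv_anti₀ (one_sub_inv_sub_inv_sq_pos hx)
  have : 1 / y ≤ 1 / x := one_div_le_one_div_of_le (by linarith) hxy
  have : 1 / y ^ 2 ≤ 1 / x ^ 2 := one_div_le_one_div_of_le (by positivity) (by gcongr)
  linarith

theorem inv_one_sub_inv_sub_inv_sq_le {x : ℝ} (hx : 3 ≤ x) :
    (1 - 1 / x - 1 / x ^ 2)⁻¹ ≤ (x - 1) / (x - 2) := by
  have hpos := one_sub_inv_sub_inv_sq_pos (by linarith : 2 ≤ x)
  rw [inv_le_iff_one_le_mul₀ hpos, div_mul_eq_mul_div, one_le_div (by linarith)]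
  field_simp
  nlinarith

theorem prod_range_inv_one_sub_inv_sub_inv_sq_le {m : ℕ} (hm : 1 ≤ m) :
    ∏ i ∈ range m, (1 - 1 / ((2 + i : ℕ) : ℝ) - 1 / ((2 + i : ℕ) : ℝ) ^ 2)⁻¹ ≤ 4 * (m : ℝ) := by
  induction m, hm using Nat.le_induction with
  | base => norm_num
  | succ m hm ih =>
    have hm' : (1 : ℝ) ≤ m := by exact_mod_cast hm
    have hm₀ : (m : ℝ) ≠ 0 := by positivity
    rw [prod_range_succ]
    push_cast at ih ⊢
    calc _ ≤ 4 * (m : ℝ) * ((2 + m - 1) / (2 + m - 2)) :=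
          mul_le_mul ih (inv_one_sub_inv_sub_inv_sq_le (by linarith))
            (inv_one_sub_inv_sub_inv_sq_nonneg (by linarith)) (by positivity)
      _ = 4 * (m + 1) := by
          rw [show (2 : ℝ) + m - 2 = m by ring]
          field_simp
          ring

theorem prod_inv_one_sub_inv_sub_inv_sq_le_four_mul_card {S : Finset ℕ} (hS : S.Nonempty)
    (hS₂ : ∀ k ∈ S, 2 ≤ k) :
    ∏ k ∈ S, (1 - 1 / (k : ℝ) - 1 / (k : ℝ) ^ 2)⁻¹ ≤ 4 * (#S : ℝ) := by
  have hanti : AntitoneOn (fun k : ℕ => (1 - 1 / (k : ℝ) - 1 / (k : ℝ) ^ 2)⁻¹) (Set.Ici 2) :=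
    fun j (hj : 2 ≤ j) k (hk : 2 ≤ k) hjk => antitoneOn_inv_one_sub_inv_sub_inv_sq
      (Set.mem_Ici.mpr (by exact_mod_cast hj)) (Set.mem_Ici.mpr (by exact_mod_cast hk))
      (by exact_mod_cast hjk)
  calc _ ≤ ∏ i ∈ range #S, (1 - 1 / ((2 + i : ℕ) : ℝ) - 1 / ((2 + i : ℕ) : ℝ) ^ 2)⁻¹ :=
        prod_le_prod_range_card_of_antitoneOn hanti
          (fun k hk => inv_one_sub_inv_sub_inv_sq_nonneg (by exact_mod_cast hk)) hS₂
    _ ≤ 4 * #S := prod_range_inv_one_sub_inv_sub_inv_sq_le (card_pos.mpr hS)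

theorem stmt12 :
    (fun n : ℕ => ∏ p ∈ n.primeFactors, (1 - 1 / (p : ℝ) - 1 / (p : ℝ) ^ 2)⁻¹)
      =O[atTop] fun n : ℕ => Real.log n := by
  refine Asymptotics.IsBigO.of_bound (4 / Real.log 2) ?_
  filter_upwards [eventually_ge_atTop 2] with n hn
  have hprimes : ∀ p ∈ n.primeFactors, 2 ≤ p := fun p hp =>
    (Nat.prime_of_mem_primeFactors hp).two_le
  have hprod := prod_inv_one_sub_inv_sub_inv_sq_le_four_mul_card
    (Nat.nonempty_primeFactors.mpr hn) hprimes
  rw [Real.norm_of_nonneg (prod_nonneg fun p hp =>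
      inv_one_sub_inv_sub_inv_sq_nonneg (by exact_mod_cast hprimes p hp)),
    Real.norm_of_nonneg (Real.log_natCast_nonneg n)]
  calc _ ≤ 4 * (#n.primeFactors : ℝ) := hprod
    _ ≤ 4 * Real.logb 2 n := by gcongr; exact Nat.card_primeFactors_le_logb (by omega)
    _ = 4 / Real.log 2 * Real.log n := by rw [Real.logb]; ring
end

section
/- Let $a, b_1, \ldots, b_\nu \in \mathbb{Q}^*_{>0}$ be strongly multiplicatively independent with invariants $m_a, m_{b_1}, \ldots, m_{b_\nu}$ (where $m_x$ is the largest integer with $x^{1/m_x} \in \mathbb{Q}$). For positive integers $i, j$, set $k = ij$ and let $\overline{W}_{i,j}$ be the image of $\langle a, b_1^j, \ldots, b_\nu^j \rangle$ in $\mathbb{Q}^*/\mathbb{Q}^{*k}$. Then $\#\overline{W}_{i,j} = \frac{ij}{(m_a, ij)} \prod_{h=1}^\nu \frac{i}{(m_{b_h}, i)}$; equivalently, defining $t_{i,j}$ by $\#\overline{W}_{i,j} \cdot t_{i,j} = i^{\nu+1} j$, one has $t_{i,j} = (ij, m_a) \prod_{h=1}^\nu (i, m_{b_h})$. -/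
/-!
With `k = i * j`, the exponent map `(p, q) ↦ a ^ p * ∏ h, (b h ^ j) ^ q h` onto `W̄` has kernel
`n₀ ℤ × ∏ h, n_h ℤ`, where `n₀ = k / (k, m_a)` and `n_h = i / (i, m_{b_h})`. Since `a` is an
`m_a`-th power, `a ^ n₀` is a `k`-th power, and likewise `(b_h ^ j) ^ n_h`. Conversely, if a word
equals `c ^ k` then `k ∣ m_{c ^ k}`, and strong independence turns this into `k ∣ m_a p` and
`k ∣ m_{b_h} j q_h`.
-/

theorem Subgroup.nat_card_closure_range_eq_prod {H ι : Type*} [CommGroup H] [Fintype ι]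
    (g : ι → H) (n : ι → ℕ)
    (hker : ∀ e : ι → ℤ, ∏ i, g i ^ e i = 1 ↔ ∀ i, (n i : ℤ) ∣ e i) :
    Nat.card (closure (Set.range g)) = ∏ i, n i := by
  have hprod_eq : ∀ e e' : ι → ℤ,
      ∏ i, g i ^ e i = ∏ i, g i ^ e' i ↔ ∀ i, (e i : ZMod (n i)) = e' i := by
    intro e e'
    rw [eq_comm, ← div_eq_one, ← Finset.prod_div_distrib]
    simp_rw [div_eq_mul_inv, ← zpow_sub, hker, ZMod.intCast_eq_intCast_iff_dvd_sub]
  let Φ : (∀ i, ZMod (n i)) → closure (Set.range g) := fun x =>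
    ⟨∏ i, g i ^ ((x i).cast : ℤ), mem_closure_range_iff_of_fintype.2 ⟨_, rfl⟩⟩
  have hΦ : Function.Bijective Φ := by
    refine ⟨fun x y hxy => funext fun i => ?_, fun ⟨w, hw⟩ => ?_⟩
    · simpa only [ZMod.intCast_zmod_cast] using (hprod_eq _ _).1 (congrArg Subtype.val hxy) i
    · obtain ⟨e, rfl⟩ := mem_closure_range_iff_of_fintype.1 hw
      exact ⟨fun i => e i, Subtype.ext ((hprod_eq _ _).2 fun i => ZMod.intCast_zmod_cast _)⟩
  rw [← Nat.card_congr (Equiv.ofBijective Φ hΦ), Nat.card_pi]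
  simp only [Nat.card_zmod]

theorem Int.natCast_dvd_mul_iff_div_gcd_dvd {k : ℕ} (hk : 0 < k) (m : ℕ) (p : ℤ) :
    (k : ℤ) ∣ m * p ↔ ((k / k.gcd m : ℕ) : ℤ) ∣ p := by
  have hg : ((k.gcd m : ℕ) : ℤ) ≠ 0 := by exact_mod_cast (Nat.gcd_pos_of_pos_left m hk).ne'
  have hk : (k : ℤ) = k.gcd m * (k / k.gcd m : ℕ) := by
    exact_mod_cast (Nat.mul_div_cancel' (Nat.gcd_dvd_left k m)).symm
  rw [← dvd_gcd_mul_iff_dvd_mul, Int.gcd_natCast_natCast]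
  nth_rewrite 1 [hk]
  exact mul_dvd_mul_iff_left hg

theorem Rat.two_le_natAbs_num_mul_den {y : ℚ} (hy : 0 < y) (hy1 : y ≠ 1) :
    2 ≤ y.num.natAbs * y.den := by
  by_contra! hlt
  have hnum : 0 < y.num := Rat.num_pos.2 hy
  have hden := y.den_pos
  have : y.num.natAbs * y.den = 1 := by
    have := Nat.mul_pos (Int.natAbs_pos.2 hnum.ne') hden
    omega
  rw [mul_eq_one] at this
  exact hy1 (Rat.ext (by simp; omega) (by simp [this.2]))

theorem mRoot_bddAbove {x : ℚ} (hx1 : x ≠ 1) :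
    BddAbove {m : ℕ | ∃ y : ℚ, 0 < y ∧ y ^ m = x} := by
  refine bddAbove_def.2 ⟨x.num.natAbs * x.den, ?_⟩
  rintro m ⟨y, hy, hyx⟩
  have hy1 : y ≠ 1 := by rintro rfl; exact hx1 (by rw [← hyx, one_pow])
  calc m ≤ 2 ^ m := Nat.lt_two_pow_self.le
    _ ≤ (y.num.natAbs * y.den) ^ m := Nat.pow_le_pow_left (Rat.two_le_natAbs_num_mul_den hy hy1) m
    _ = x.num.natAbs * x.den := by rw [← hyx, Rat.num_pow, Rat.den_pow, Int.natAbs_pow, mul_pow]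

theorem mRoot_spec {x : ℚ} (hx : 0 < x) (hx1 : x ≠ 1) : ∃ y : ℚ, 0 < y ∧ y ^ mRoot x = x :=
  Nat.sSup_mem (s := {m : ℕ | ∃ y : ℚ, 0 < y ∧ y ^ m = x}) ⟨1, x, hx, pow_one x⟩
    (mRoot_bddAbove hx1)

theorem le_mRoot {x y : ℚ} {m : ℕ} (hx1 : x ≠ 1) (hy : 0 < y) (hyx : y ^ m = x) : m ≤ mRoot x :=
  le_csSup (mRoot_bddAbove hx1) ⟨y, hy, hyx⟩

theorem exists_pos_pow_lcm_eq_of_pow_eq {K : Type*} [Field K] [LinearOrder K]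
    [IsStrictOrderedRing K] {y c : K} (hy : 0 < y) (hc : 0 < c) {m k : ℕ}
    (h : y ^ m = c ^ k) : ∃ z : K, 0 < z ∧ z ^ Nat.lcm m k = c ^ k := by
  set t := k / Nat.gcd m k
  have hdt : Nat.gcd m k * t = k := Nat.mul_div_cancel' (Nat.gcd_dvd_right m k)
  have hlcm : Nat.lcm m k = m * t := Nat.mul_div_assoc m (Nat.gcd_dvd_right m k)
  have hz : y ^ (m : ℤ) = c ^ (k : ℤ) := by rw [zpow_natCast, zpow_natCast, h]
  -- Bézout: `gcd m k = m * A + k * B`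
  set A := Nat.gcdA m k
  set B := Nat.gcdB m k
  refine ⟨y ^ B * c ^ A, mul_pos (zpow_pos hy B) (zpow_pos hc A), ?_⟩
  rw [← zpow_natCast, ← zpow_natCast, hlcm]
  calc (y ^ B * c ^ A) ^ ((m * t : ℕ) : ℤ) = (y ^ (m : ℤ)) ^ (B * t) * c ^ (A * m * t) := by
        rw [mul_zpow, ← zpow_mul, ← zpow_mul, ← zpow_mul]; push_cast; ring_nf
    _ = c ^ (((m : ℤ) * A + k * B) * t) := by
        rw [hz, ← zpow_mul, ← zpow_add₀ hc.ne']; ring_nf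
    _ = c ^ (k : ℤ) := by rw [← Nat.gcd_eq_gcd_ab]; exact_mod_cast congrArg (c ^ ·) hdt

theorem dvd_mRoot_pow {c : ℚ} (hc : 0 < c) (hc1 : c ≠ 1) {k : ℕ} (hk : k ≠ 0) :
    k ∣ mRoot (c ^ k) := by
  have hck1 : c ^ k ≠ 1 := (pow_eq_one_iff_of_nonneg hc.le hk).not.2 hc1
  obtain ⟨y, hy, hyc⟩ := mRoot_spec (pow_pos hc k) hck1
  obtain ⟨z, hz, hzc⟩ := exists_pos_pow_lcm_eq_of_pow_eq hy hc hyc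
  have hm : mRoot (c ^ k) ≠ 0 := (Nat.pos_of_ne_zero hk).trans_le (le_mRoot hck1 hc rfl) |>.ne'
  have hlcm : Nat.lcm (mRoot (c ^ k)) k = mRoot (c ^ k) :=
    (le_mRoot hck1 hz hzc).antisymm
      (Nat.le_of_dvd (Nat.pos_of_ne_zero (Nat.lcm_ne_zero hm hk)) (Nat.dvd_lcm_left _ _))
  exact hlcm ▸ Nat.dvd_lcm_right _ k

theorem pow_div_gcd_mRoot_mem_range_powMonoidHom {x : ℚˣ} (hx : (0 : ℚ) < x) (k : ℕ) :
    x ^ (k / k.gcd (mRoot x)) ∈ (powMonoidHom k : ℚˣ →* ℚˣ).range := by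
  rcases eq_or_ne x 1 with rfl | hx1
  · simp
  obtain ⟨y, hy, hyx⟩ := mRoot_spec hx (Units.val_eq_one.not.2 hx1)
  set m := mRoot x
  have hY : Units.mk0 y hy.ne' ^ m = x := Units.ext (by simp [hyx])
  refine ⟨Units.mk0 y hy.ne' ^ (m / k.gcd m), ?_⟩
  rw [powMonoidHom_apply, ← pow_mul, ← hY, ← pow_mul, Nat.div_mul_right_comm (Nat.gcd_dvd_right k m),
    Nat.mul_div_assoc m (Nat.gcd_dvd_left k m)]

def StronglyMulIndependent {ν : ℕ} (a : ℚˣ) (b : Fin ν → ℚˣ) : Prop :=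
  (∀ (l0 : ℤ) (l : Fin ν → ℤ), a ^ l0 * ∏ h, b h ^ l h = 1 → l0 = 0 ∧ l = 0) ∧
    ∀ (l0 : ℤ) (l : Fin ν → ℤ) (c : ℚˣ), (0 : ℚ) < c → c ≠ 1 →
      a ^ l0 * ∏ h, b h ^ l h = c →
      (mRoot (c : ℚ) : ℤ) ∣ (mRoot (a : ℚ) : ℤ) * l0 ∧
        ∀ h, (mRoot (c : ℚ) : ℤ) ∣ (mRoot (b h : ℚ) : ℤ) * l h

theorem StronglyMulIndependent.dvd_mRoot_mul_of_eq_pow {ν : ℕ} {a : ℚˣ} {b : Fin ν → ℚˣ}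
    (hab : StronglyMulIndependent a b) (ha : (0 : ℚ) < a) (hb : ∀ h, (0 : ℚ) < b h)
    {l0 : ℤ} {l : Fin ν → ℤ} {c : ℚˣ} {k : ℕ} (hk : k ≠ 0)
    (hw : a ^ l0 * ∏ h, b h ^ l h = c ^ k) :
    (k : ℤ) ∣ (mRoot (a : ℚ) : ℤ) * l0 ∧ ∀ h, (k : ℤ) ∣ (mRoot (b h : ℚ) : ℤ) * l h := by
  set w := a ^ l0 * ∏ h, b h ^ l h
  rcases eq_or_ne w 1 with hw1 | hw1
  · obtain ⟨rfl, rfl⟩ := hab.1 l0 l hw1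
    simp
  have hpos : ∀ u : ℚˣ, (0 : ℚ) < u → u ∈ Units.posSubgroup ℚ := fun u => (Units.mem_posSubgroup u).2
  have hwpos : (0 : ℚ) < w := (Units.mem_posSubgroup w).1 <|
    mul_mem (zpow_mem (hpos a ha) _) (prod_mem fun h _ => zpow_mem (hpos _ (hb h)) _)
  have habs : |(c : ℚ)| ^ k = w := by
    rw [← abs_pow, ← Units.val_pow_eq_pow_val, ← hw, abs_of_pos hwpos]
  have hc1 : |(c : ℚ)| ≠ 1 := fun h => hw1 (Units.ext (by rw [← habs, h, one_pow, Units.val_one]))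
  have hkw : (k : ℤ) ∣ mRoot w := by
    rw [← habs]; exact_mod_cast dvd_mRoot_pow (abs_pos.2 c.ne_zero) hc1 hk
  obtain ⟨h0, hh⟩ := hab.2 l0 l w hwpos hw1 rfl
  exact ⟨hkw.trans h0, fun h => hkw.trans (hh h)⟩

theorem StronglyMulIndependent.mem_range_powMonoidHom_iff {ν : ℕ} {a : ℚˣ} {b : Fin ν → ℚˣ}
    (hab : StronglyMulIndependent a b) (ha : (0 : ℚ) < a) (hb : ∀ h, (0 : ℚ) < b h)
    {i j : ℕ} (hi : 0 < i) (hj : 0 < j) (p : ℤ) (q : Fin ν → ℤ) :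
    a ^ p * ∏ h, (b h ^ j) ^ q h ∈ (powMonoidHom (i * j) : ℚˣ →* ℚˣ).range ↔
      (((i * j) / (i * j).gcd (mRoot a) : ℕ) : ℤ) ∣ p ∧
        ∀ h, ((i / i.gcd (mRoot (b h)) : ℕ) : ℤ) ∣ q h := by
  constructor
  · rintro ⟨c, hc⟩
    have hw : a ^ p * ∏ h, b h ^ ((j : ℤ) * q h) = c ^ (i * j) := by
      simp_rw [zpow_mul, zpow_natCast]; exact hc.symm
    obtain ⟨hp, hq⟩ := hab.dvd_mRoot_mul_of_eq_pow ha hb (by positivity) hw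
    refine ⟨(Int.natCast_dvd_mul_iff_div_gcd_dvd (by positivity) _ p).1 hp,
      fun h => (Int.natCast_dvd_mul_iff_div_gcd_dvd hi _ _).1 ?_⟩
    have hjq := hq h
    rw [Nat.cast_mul, mul_left_comm, mul_comm (i : ℤ)] at hjq
    exact (mul_dvd_mul_iff_left (by positivity)).1 hjq
  · rintro ⟨⟨s, rfl⟩, hq⟩
    refine mul_mem ?_ (prod_mem fun h _ => ?_)
    · rw [zpow_mul, zpow_natCast]
      exact zpow_mem (pow_div_gcd_mRoot_mem_range_powMonoidHom ha _) s
    · obtain ⟨t, ht⟩ := hq h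
      obtain ⟨c, hc⟩ := pow_div_gcd_mRoot_mem_range_powMonoidHom (hb h) i
      rw [ht, zpow_mul, zpow_natCast, ← pow_mul, mul_comm j, pow_mul, ← hc]
      exact zpow_mem (MonoidHom.mem_range.2
        ⟨c, by rw [powMonoidHom_apply, powMonoidHom_apply, pow_mul]⟩) t

theorem stmt17 (ν : ℕ) (a : ℚˣ) (b : Fin ν → ℚˣ)
    (ha : (0 : ℚ) < a) (hb : ∀ h, (0 : ℚ) < b h)
    (hindep : ∀ (l0 : ℤ) (l : Fin ν → ℤ),
      a ^ l0 * ∏ h, b h ^ l h = 1 → l0 = 0 ∧ l = 0)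
    (hstrong : ∀ (l0 : ℤ) (l : Fin ν → ℤ) (c : ℚˣ), (0 : ℚ) < c → c ≠ 1 →
      a ^ l0 * ∏ h, b h ^ l h = c →
      (mRoot (c : ℚ) : ℤ) ∣ (mRoot (a : ℚ) : ℤ) * l0 ∧
        ∀ h, (mRoot (c : ℚ) : ℤ) ∣ (mRoot (b h : ℚ) : ℤ) * l h)
    (i j : ℕ) (hi : 0 < i) (hj : 0 < j) :
    Nat.card (Subgroup.map
        (QuotientGroup.mk' ((powMonoidHom (i * j) : ℚˣ →* ℚˣ).range))
        (Subgroup.closure ({a} ∪ Set.range fun h => b h ^ j))) *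
      (Nat.gcd (i * j) (mRoot (a : ℚ)) * ∏ h, Nat.gcd i (mRoot (b h : ℚ))) =
    i ^ (ν + 1) * j := by
  have hgen : ({a} ∪ Set.range fun h => b h ^ j) =
      Set.range fun o : Option (Fin ν) => o.elim a fun h => b h ^ j := by
    rw [Option.range_elim, Set.insert_eq]
  rw [hgen, MonoidHom.map_closure, ← Set.range_comp, Subgroup.nat_card_closure_range_eq_prod _
    (fun o => o.elim ((i * j) / (i * j).gcd (mRoot a)) fun h => i / i.gcd (mRoot (b h))) ?ker,
    Fintype.prod_option, mul_mul_mul_comm, ← Finset.prod_mul_distrib]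
  · simp only [Option.elim, Nat.div_mul_cancel (Nat.gcd_dvd_left _ _), Finset.prod_const,
      Finset.card_univ, Fintype.card_fin]
    ring
  case ker =>
    intro e
    simp only [Function.comp_apply, ← map_zpow]
    rw [← map_prod, ← MonoidHom.mem_ker, QuotientGroup.ker_mk', Fintype.prod_option, Option.forall]
    exact StronglyMulIndependent.mem_range_powMonoidHom_iff ⟨hindep, hstrong⟩ ha hb hi hj _ _
end
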